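/- Let n ≥ 1 and let F : (ℳⁿ)ⁿ → ℝ be a nonnegative function which is additive in each variable and which satisfies F(A₁,…,Aₙ) = 0 whenever there exist two indices i ≠ j such that A_i and A_j are proportional matrices of rank one. Then there exists a constant a ≥ 0 such that F(A₁,…,Aₙ) = a·D(A₁,…,Aₙ) for all A₁,…,Aₙ ∈ ℳⁿ. -/

import Mathlib

/-- The mixed discriminant of `n` real `n × n` matrices:
`D(A₁,…,Aₙ) = (1/n!) Σ_{σ ∈ S(n)} det(M_σ)`, where the `j`-th column of `M_σ`
is the `j`-th column of `A_{σ(j)}`. -/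
noncomputable def mixedDisc (n : ℕ) (A : Fin n → Matrix (Fin n) (Fin n) ℝ) : ℝ :=
  ((n.factorial : ℝ))⁻¹ *
    ∑ σ : Equiv.Perm (Fin n), (Matrix.of fun i j => A (σ j) i j).det

/-!
Every positive semidefinite matrix is a sum of matrices `v vᵀ`, and both `F` and the mixed
discriminant are additive in each slot, so it suffices to compare them on tuples
`(x₁ x₁ᵀ, …, xₙ xₙᵀ)`, i.e. as functions `f X` of the matrix `X` with rows `xᵢ`.
Additivity and nonnegativity make `f` homogeneous of degree two in each row. By the
parallelogram law and the vanishing hypothesis, `s ↦ f (X with xᵢ replaced by xᵢ + s xⱼ)`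
is a nonnegative solution of Jensen's equation, hence constant. So `f` is invariant under row
transvections and picks up `c²` under scaling a row by `c`; as diagonal matrices and
transvections generate all matrices, `f X = det X ^ 2 * f 1`. Finally
`D(x₁ x₁ᵀ, …, xₙ xₙᵀ) = det X ^ 2 / n!`.
-/

open Matrix Function Finset

section FunctionalEquations

variable {K : Type*} [Field K] [LinearOrder K] [IsStrictOrderedRing K] [Archimedean K]

lemma eq_zero_of_forall_nat_mul_abs_le {d C : K} (h : ∀ k : ℕ, k * |d| ≤ C) : d = 0 := by
  by_contra hd
  obtain ⟨k, hk⟩ := exists_nat_gt (C / |d|)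
  rw [div_lt_iff₀ (abs_pos.2 hd)] at hk
  linarith [h k]

lemma eq_mul_apply_one_of_additive_of_nonneg [FloorSemiring K] {g : K → K}
    (hadd : ∀ c d, 0 ≤ c → 0 ≤ d → g (c + d) = g c + g d)
    (hnonneg : ∀ c, 0 ≤ c → 0 ≤ g c) {c : K} (hc : 0 ≤ c) : g c = c * g 1 := by
  have hnat : ∀ (k : ℕ) {c : K}, 0 ≤ c → g (k * c) = k * g c := by
    intro k c hc
    induction k with
    | zero => simpa using hadd 0 0 le_rfl le_rfl
    | succ k ih => rw [Nat.cast_succ, add_one_mul, hadd _ _ (by positivity) hc, ih, add_one_mul]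
  have hmono : ∀ {c d : K}, 0 ≤ c → c ≤ d → g c ≤ g d := fun {c d} hc hcd => by
    have := hadd c (d - c) hc (sub_nonneg.2 hcd)
    rw [add_sub_cancel] at this
    linarith [hnonneg (d - c) (sub_nonneg.2 hcd)]
  have hg1 := hnonneg 1 zero_le_one
  refine sub_eq_zero.1 (eq_zero_of_forall_nat_mul_abs_le (C := g 1) fun k => ?_)
  have hkc : 0 ≤ (k : K) * c := by positivity
  set m := ⌊(k : K) * c⌋₊
  have h1 : (m : K) ≤ k * c := Nat.floor_le hkc
  have h2 : (k : K) * c < m + 1 := Nat.lt_floor_add_one _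
  have hnat1 : ∀ j : ℕ, g j = j * g 1 := fun j => by simpa using hnat j zero_le_one
  have hlo : (m : K) * g 1 ≤ k * g c := by
    rw [← hnat k hc, ← hnat1]
    exact hmono (by positivity) h1
  have hhi : k * g c ≤ (m + 1) * g 1 := by
    rw [← hnat k hc, ← Nat.cast_succ, ← hnat1]
    exact hmono hkc (by push_cast; exact h2.le)
  rw [← abs_of_nonneg (Nat.cast_nonneg (α := K) k), ← abs_mul, abs_le]
  constructor <;> nlinarith

lemma apply_eq_apply_zero_of_jensen_of_nonneg {p : K → K}
    (hp : ∀ s u, p (s + u) + p (s - u) = 2 * p s) (hnonneg : ∀ s, 0 ≤ p s) (s : K) :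
    p s = p 0 := by
  let q : K →+ K := AddMonoidHom.mk' (fun s => p s - p 0) fun s u => by
    have h₁ := hp s u
    have h₂ := hp u s
    have h₃ := hp 0 (s - u)
    rw [add_comm u s] at h₂
    rw [zero_add, zero_sub, neg_sub] at h₃
    linarith
  have hbound : ∀ (k : ℕ) (t : K), -p 0 ≤ k * q t := fun k t => by
    rw [← nsmul_eq_mul, ← map_nsmul]
    simp [q, hnonneg]
  refine sub_eq_zero.1 (eq_zero_of_forall_nat_mul_abs_le (C := p 0) fun k => ?_)
  have h₁ := hbound k s
  have h₂ := hbound k (-s)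
  rw [map_neg] at h₂
  change -p 0 ≤ k * (p s - p 0) at h₁
  change -p 0 ≤ k * -(p s - p 0) at h₂
  rw [← abs_of_nonneg (Nat.cast_nonneg (α := K) k), ← abs_mul, abs_le]
  constructor <;> linarith

end FunctionalEquations

theorem eq_det_sq_mul_apply_one {𝕜 n : Type*} [Field 𝕜] [Fintype n] [DecidableEq n]
    {f : Matrix n n 𝕜 → 𝕜}
    (hscale : ∀ X i (c : 𝕜), f (X.updateRow i (c • X i)) = c ^ 2 * f X)
    (htransvec : ∀ X i j, i ≠ j → ∀ c : 𝕜, f (X.updateRow i (X i + c • X j)) = f X)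
    (X : Matrix n n 𝕜) : f X = X.det ^ 2 * f 1 := by
  let S : Submonoid (Matrix n n 𝕜) :=
    { carrier := {M | ∀ X, f (M * X) = M.det ^ 2 * f X}
      one_mem' := by simp
      mul_mem' := fun {M N} hM hN X => by
        rw [Matrix.mul_assoc, hM, hN, det_mul]
        ring }
  have hsingle : ∀ i (c : 𝕜), diagonal (Pi.mulSingle i c) ∈ S := fun i c X => by
    have : diagonal (Pi.mulSingle i c) * X = X.updateRow i (c • X i) := by
      ext k l
      rcases eq_or_ne k i with rfl | hk <;> simp [updateRow_apply, *]
    rw [this, hscale, det_diagonal, Finset.prod_pi_mulSingle', if_pos (mem_univ i)]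
  -- `d = ∏ i, Pi.mulSingle i (d i)` in the commutative monoid `n → 𝕜`, on which `diagonal`
  -- is multiplicative
  have hdiag : ∀ d, diagonal d ∈ S := fun d => by
    have : d ∈ S.comap (diagonalRingHom n 𝕜 : (n → 𝕜) →* Matrix n n 𝕜) := by
      rw [← Finset.univ_prod_mulSingle d]
      exact Submonoid.prod_mem _ fun i _ => hsingle i (d i)
    exact this
  have htrans : ∀ t : TransvectionStruct n 𝕜, t.toMatrix ∈ S := fun t X => by
    have : t.toMatrix * X = X.updateRow t.i (X t.i + t.c • X t.j) := by
      ext k l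
      rcases eq_or_ne k t.i with rfl | hk
      · simp [TransvectionStruct.toMatrix, transvection_mul_apply_same]
      · simp [TransvectionStruct.toMatrix, transvection_mul_apply_of_ne _ _ _ _ hk, hk]
    rw [this, htransvec X _ _ t.hij, TransvectionStruct.det, one_pow, one_mul]
  have hX : X ∈ S := diagonal_transvection_induction (· ∈ S) X (fun d _ => hdiag d) htrans
    fun _ _ => S.mul_mem
  simpa using hX 1

section VecMulVecSelf

variable {m : Type*}

lemma posSemidef_vecMulVec_self [Fintype m] (u : m → ℝ) : (vecMulVec u u).PosSemidef := by
  simpa using posSemidef_vecMulVec_self_star u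

lemma rank_vecMulVec_self [Fintype m] {u : m → ℝ} (hu : u ≠ 0) :
    (vecMulVec u u).rank = 1 := by
  rw [vecMulVec_eq Unit, ← transpose_replicateCol, rank_self_mul_transpose,
    rank_eq_finrank_span_cols]
  have : Set.range (replicateCol Unit u).col = {u} := Set.range_const (ι := Unit) (c := u)
  rw [this, finrank_span_singleton hu]

lemma vecMulVec_smul_self {R : Type*} [CommSemiring R] (t : R) (u : m → R) :
    vecMulVec (t • u) (t • u) = t ^ 2 • vecMulVec u u := by
  rw [smul_vecMulVec, vecMulVec_smul, smul_smul, sq]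

lemma vecMulVec_add_self_add_vecMulVec_sub_self {R : Type*} [CommRing R] (w v : m → R) :
    vecMulVec (w + v) (w + v) + vecMulVec (w - v) (w - v)
      = (vecMulVec w w + vecMulVec w w) + (vecMulVec v v + vecMulVec v v) := by
  ext i j
  simp only [Matrix.add_apply, vecMulVec_apply, Pi.add_apply, Pi.sub_apply]
  ring

end VecMulVecSelf

section PosSemidefAdditive

variable {ι m : Type*} [DecidableEq ι]

def IsMultiadditiveOnPosSemidef (F : (ι → Matrix m m ℝ) → ℝ) : Prop :=
  ∀ (A : ι → Matrix m m ℝ) (i : ι) (B : Matrix m m ℝ), (∀ j, (A j).PosSemidef) →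
    B.PosSemidef → F (update A i (A i + B)) = F A + F (update A i B)

lemma posSemidef_update {A : ι → Matrix m m ℝ} (hA : ∀ j, (A j).PosSemidef) {i : ι}
    {M : Matrix m m ℝ} (hM : M.PosSemidef) : ∀ j, (update A i M j).PosSemidef :=
  (forall_update_iff A fun _ B => B.PosSemidef).2 ⟨hM, fun j _ => hA j⟩

namespace IsMultiadditiveOnPosSemidef

variable {F : (ι → Matrix m m ℝ) → ℝ} (hF : IsMultiadditiveOnPosSemidef F)
  {A : ι → Matrix m m ℝ} (hA : ∀ j, (A j).PosSemidef) (i : ι)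
include hF hA

lemma update_add {M N : Matrix m m ℝ} (hM : M.PosSemidef) (hN : N.PosSemidef) :
    F (update A i (M + N)) = F (update A i M) + F (update A i N) := by
  simpa using hF (update A i M) i N (posSemidef_update hA hM) hN

lemma update_zero : F (update A i 0) = 0 := by
  simpa using hF A i 0 hA PosSemidef.zero

lemma update_sum {κ : Type*} (s : Finset κ) {M : κ → Matrix m m ℝ}
    (hM : ∀ k, (M k).PosSemidef) :
    F (update A i (∑ k ∈ s, M k)) = ∑ k ∈ s, F (update A i (M k)) := by
  classical
  induction s using Finset.induction_on with
  | empty => simpa using hF.update_zero hA i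
  | insert k s hk ih =>
    rw [sum_insert hk, sum_insert hk,
      hF.update_add hA i (hM k) (posSemidef_sum s fun k _ => hM k), ih]

lemma update_smul (hnonneg : ∀ A, (∀ j, (A j).PosSemidef) → 0 ≤ F A)
    {M : Matrix m m ℝ} (hM : M.PosSemidef) {c : ℝ} (hc : 0 ≤ c) :
    F (update A i (c • M)) = c * F (update A i M) := by
  simpa using eq_mul_apply_one_of_additive_of_nonneg (g := fun c => F (update A i (c • M)))
    (fun c d hc hd => by rw [add_smul]; exact hF.update_add hA i (hM.smul hc) (hM.smul hd))
    (fun c hc => hnonneg _ (posSemidef_update hA (hM.smul hc))) hc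

end IsMultiadditiveOnPosSemidef

end PosSemidefAdditive

section OuterRows

variable {ι m : Type*}

def outerRows (X : Matrix ι m ℝ) : ι → Matrix m m ℝ :=
  fun i => vecMulVec (X i) (X i)

lemma outerRows_updateRow [DecidableEq ι] (X : Matrix ι m ℝ) (i : ι) (v : m → ℝ) :
    outerRows (X.updateRow i v) = update (outerRows X) i (vecMulVec v v) := by
  ext1 k
  rcases eq_or_ne k i with rfl | hk <;> simp [outerRows, *]

lemma posSemidef_outerRows [Fintype m] (X : Matrix ι m ℝ) (i : ι) :
    (outerRows X i).PosSemidef :=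
  posSemidef_vecMulVec_self (X i)

end OuterRows

namespace IsMultiadditiveOnPosSemidef

variable {ι m : Type*} [DecidableEq ι] [Fintype m] {F : (ι → Matrix m m ℝ) → ℝ}

theorem eq_of_eq_on_outerRows [Fintype ι] {G : (ι → Matrix m m ℝ) → ℝ}
    (hF : IsMultiadditiveOnPosSemidef F) (hG : IsMultiadditiveOnPosSemidef G)
    (h : ∀ X : Matrix ι m ℝ, F (outerRows X) = G (outerRows X))
    {A : ι → Matrix m m ℝ} (hA : ∀ j, (A j).PosSemidef) : F A = G A := by
  suffices ∀ s : Finset ι, ∀ A : ι → Matrix m m ℝ, (∀ j, (A j).PosSemidef) →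
      (∀ j ∉ s, ∃ v, A j = vecMulVec v v) → F A = G A from
    this univ A hA fun j hj => absurd (mem_univ j) hj
  intro s
  induction s using Finset.induction_on with
  | empty =>
    intro A _ hrank
    choose v hv using fun j => hrank j (notMem_empty j)
    simpa [show A = outerRows (Matrix.of v) from funext hv] using h (Matrix.of v)
  | insert i s hi ih =>
    intro A hA hrank
    obtain ⟨r, w, hw⟩ := posSemidef_iff_eq_sum_vecMulVec.1 (hA i)
    simp only [star_trivial] at hw
    rw [← update_eq_self i A, hw, hF.update_sum hA, hG.update_sum hA]
    · refine sum_congr rfl fun k _ => ih _ (posSemidef_update hA (posSemidef_vecMulVec_self _)) ?_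
      intro j hj
      rcases eq_or_ne j i with rfl | hji
      · exact ⟨w k, update_self ..⟩
      · rw [update_of_ne hji]
        exact hrank j (by simp [hji, hj])
    all_goals exact fun k => posSemidef_vecMulVec_self _

end IsMultiadditiveOnPosSemidef

section SquareMatrices

variable {n : Type*} [Fintype n] [DecidableEq n] {F : (n → Matrix n n ℝ) → ℝ}
  (hF : IsMultiadditiveOnPosSemidef F)
  (hvanish : ∀ A : n → Matrix n n ℝ, (∀ j, (A j).PosSemidef) →
    (∃ i j, i ≠ j ∧ (A i).rank = 1 ∧ (A j).rank = 1 ∧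
      ∃ c : ℝ, 0 < c ∧ A i = c • A j) → F A = 0)

include hF

lemma apply_outerRows_updateRow_smul (hnonneg : ∀ A, (∀ j, (A j).PosSemidef) → 0 ≤ F A)
    (X : Matrix n n ℝ) (i : n) (c : ℝ) :
    F (outerRows (X.updateRow i (c • X i))) = c ^ 2 * F (outerRows X) := by
  rw [outerRows_updateRow, vecMulVec_smul_self,
    hF.update_smul (posSemidef_outerRows X) i hnonneg (posSemidef_vecMulVec_self _) (sq_nonneg c)]
  rw [show update (outerRows X) i (vecMulVec (X i) (X i)) = outerRows X from update_eq_self i _]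

include hvanish

lemma apply_outerRows_eq_zero_of_row_eq_smul {X : Matrix n n ℝ} {i j : n} (hij : i ≠ j)
    {t : ℝ} (hX : X i = t • X j) : F (outerRows X) = 0 := by
  by_cases hzero : t = 0 ∨ X j = 0
  · have : outerRows X i = 0 := by rcases hzero with rfl | h <;> simp [outerRows, *]
    rw [← update_eq_self i (outerRows X), this]
    exact hF.update_zero (posSemidef_outerRows X) i
  push Not at hzero
  refine hvanish _ (posSemidef_outerRows X) ⟨i, j, hij, ?_, rank_vecMulVec_self hzero.2, t ^ 2,
    by positivity [hzero.1], ?_⟩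
  · exact rank_vecMulVec_self (hX ▸ smul_ne_zero hzero.1 hzero.2)
  · simp only [outerRows, hX, vecMulVec_smul_self]

lemma apply_outerRows_updateRow_add_smul (hnonneg : ∀ A, (∀ j, (A j).PosSemidef) → 0 ≤ F A)
    (X : Matrix n n ℝ) {i j : n} (hij : i ≠ j) (t : ℝ) :
    F (outerRows (X.updateRow i (X i + t • X j))) = F (outerRows X) := by
  have hA := posSemidef_outerRows X
  set p : ℝ → ℝ := fun s => F (outerRows (X.updateRow i (X i + s • X j))) with hp
  have hpsd : ∀ v : n → ℝ, (vecMulVec v v).PosSemidef := posSemidef_vecMulVec_self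
  -- the parallelogram law, with the term proportional to `X j` killed by `hvanish`
  have hjensen : ∀ s u, p (s + u) + p (s - u) = 2 * p s := fun s u => by
    have hprop : F (update (outerRows X) i (vecMulVec (u • X j) (u • X j))) = 0 := by
      rw [← outerRows_updateRow]
      exact apply_outerRows_eq_zero_of_row_eq_smul hF hvanish hij (t := u)
        (by simp [updateRow_ne hij.symm])
    have hw : X i + (s + u) • X j = (X i + s • X j) + u • X j := by module
    have hv : X i + (s - u) • X j = (X i + s • X j) - u • X j := by module
    simp only [hp, outerRows_updateRow, hw, hv]
    rw [← hF.update_add hA i (hpsd _) (hpsd _), vecMulVec_add_self_add_vecMulVec_sub_self,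
      hF.update_add hA i ((hpsd _).add (hpsd _)) ((hpsd _).add (hpsd _)),
      hF.update_add hA i (hpsd _) (hpsd _), hF.update_add hA i (hpsd _) (hpsd _), hprop]
    ring
  have := apply_eq_apply_zero_of_jensen_of_nonneg hjensen
    (fun s => hnonneg _ (posSemidef_outerRows _)) t
  simpa [hp] using this

theorem apply_outerRows_eq_det_sq_mul (hnonneg : ∀ A, (∀ j, (A j).PosSemidef) → 0 ≤ F A)
    (X : Matrix n n ℝ) :
    F (outerRows X) = X.det ^ 2 * F (outerRows 1) :=
  eq_det_sq_mul_apply_one (f := fun X => F (outerRows X))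
    (apply_outerRows_updateRow_smul hF hnonneg)
    (fun X _ _ hij => apply_outerRows_updateRow_add_smul hF hvanish hnonneg X hij) X

end SquareMatrices

section MixedDisc

variable {n : ℕ}

lemma of_update_apply_perm_eq_updateCol (A : Fin n → Matrix (Fin n) (Fin n) ℝ)
    (σ : Equiv.Perm (Fin n)) (i : Fin n) (B : Matrix (Fin n) (Fin n) ℝ) :
    Matrix.of (fun p q => update A i B (σ q) p q)
      = (Matrix.of fun p q => A (σ q) p q).updateCol (σ⁻¹ i) (fun p => B p (σ⁻¹ i)) := by
  ext p q
  rcases eq_or_ne q (σ⁻¹ i) with rfl | hq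
  · simp
  · have : σ q ≠ i := fun h => hq (by simp [← h])
    rw [updateCol_ne hq]
    simp [update_of_ne this]

lemma mixedDisc_update_add (A : Fin n → Matrix (Fin n) (Fin n) ℝ) (i : Fin n)
    (M N : Matrix (Fin n) (Fin n) ℝ) :
    mixedDisc n (update A i (M + N))
      = mixedDisc n (update A i M) + mixedDisc n (update A i N) := by
  simp only [mixedDisc, ← mul_add, ← sum_add_distrib, of_update_apply_perm_eq_updateCol]
  congr 1
  exact sum_congr rfl fun σ _ => det_updateCol_add _ _ _ _

lemma isMultiadditiveOnPosSemidef_const_mul_mixedDisc (a : ℝ) :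
    IsMultiadditiveOnPosSemidef fun A => a * mixedDisc n A := fun A i B _ _ => by
  dsimp only
  rw [mixedDisc_update_add, update_eq_self, mul_add]

lemma mixedDisc_outerRows (X : Matrix (Fin n) (Fin n) ℝ) :
    mixedDisc n (outerRows X) = (n.factorial : ℝ)⁻¹ * X.det ^ 2 := by
  have hterm : ∀ σ : Equiv.Perm (Fin n), (Matrix.of fun p q => outerRows X (σ q) p q).det
      = Equiv.Perm.sign σ * X.det * ∏ q, X (σ q) q := fun σ => by
    have : (Matrix.of fun p q => outerRows X (σ q) p q)
        = Xᵀ.submatrix id σ * diagonal fun q => X (σ q) q := by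
      ext p q
      simp [outerRows, vecMulVec_apply]
    rw [this, det_mul, det_diagonal, det_permute', det_transpose, mul_assoc]
  rw [mixedDisc, sum_congr rfl fun σ _ => hterm σ, sq]
  conv_rhs => arg 2; arg 2; rw [det_apply']
  congr 1
  rw [mul_sum]
  exact sum_congr rfl fun σ _ => by ring

end MixedDisc

theorem mixedDisc_characterization {n : ℕ}
    (F : (Fin n → Matrix (Fin n) (Fin n) ℝ) → ℝ)
    (hnonneg : ∀ A : Fin n → Matrix (Fin n) (Fin n) ℝ,
      (∀ j, (A j).PosSemidef) → 0 ≤ F A)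
    (hadd : ∀ (A : Fin n → Matrix (Fin n) (Fin n) ℝ) (i : Fin n)
      (B : Matrix (Fin n) (Fin n) ℝ), (∀ j, (A j).PosSemidef) → B.PosSemidef →
      F (Function.update A i (A i + B)) = F A + F (Function.update A i B))
    (hvanish : ∀ A : Fin n → Matrix (Fin n) (Fin n) ℝ,
      (∀ j, (A j).PosSemidef) →
      (∃ i j, i ≠ j ∧ (A i).rank = 1 ∧ (A j).rank = 1 ∧
        ∃ c : ℝ, 0 < c ∧ A i = c • A j) →
      F A = 0) :
    ∃ a : ℝ, 0 ≤ a ∧ ∀ A : Fin n → Matrix (Fin n) (Fin n) ℝ,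
      (∀ j, (A j).PosSemidef) → F A = a * mixedDisc n A := by
  refine ⟨n.factorial * F (outerRows 1),
    mul_nonneg (Nat.cast_nonneg _) (hnonneg _ (posSemidef_outerRows 1)), fun A hA => ?_⟩
  refine IsMultiadditiveOnPosSemidef.eq_of_eq_on_outerRows hadd
    (isMultiadditiveOnPosSemidef_const_mul_mixedDisc _) (fun X => ?_) hA
  rw [apply_outerRows_eq_det_sq_mul hadd hvanish hnonneg X, mixedDisc_outerRows]
  field_simp
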